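/- Under the Markovian grand coupling of IDLA(K,ν) processes, set h(A) := E[T^A], where T^A is the filling time started from A ⊆ V. Then for any x ∈ V and any A ⊆ V, 0 ≤ h(A) − h(A∪{x}) ≤ 1/min_{z∈V} p(z), where p(z) := P_ν(τ_z < τ_†) is the probability that a (K,ν)-walk hits z before dying. -/

import Mathlib

open scoped ENNReal BigOperators
open Filter Asymptotics

namespace ARW

variable {V : Type} [Fintype V] [DecidableEq V]

/-- A sub-stochastic matrix: every row sums to at most `1`. -/
def SubStochastic (K : V → V → ℝ≥0∞) : Prop := ∀ x, ∑ y, K x y ≤ 1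

/-- Non-degenerate: no principal sub-matrix of `K` is stochastic. -/
def NonDegenerate (K : V → V → ℝ≥0∞) : Prop :=
  ∀ S : Finset V, S.Nonempty → ∃ x ∈ S, ∑ y ∈ S, K x y ≠ 1

/-- A probability vector on `V`. -/
def IsProbVec (ν : V → ℝ≥0∞) : Prop := ∑ x, ν x = 1

/-- Probability that the `K`-walk currently at `x` next follows the trajectory `xs`
and is then killed. -/
noncomputable def pathProb (K : V → V → ℝ≥0∞) : V → List V → ℝ≥0∞
  | x, [] => 1 - ∑ y, K x y
  | x, y :: ys => K x y * pathProb K y ys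

/-- Probability that a `(K,ν)`-walk has the (finite) full trajectory `w`. -/
noncomputable def walkProb (K : V → V → ℝ≥0∞) (ν : V → ℝ≥0∞) : List V → ℝ≥0∞
  | [] => 0
  | x :: xs => ν x * pathProb K x xs

/-- `p(x)`: the probability that a `(K,ν)`-walk visits `x` before dying. -/
noncomputable def hitProb (K : V → V → ℝ≥0∞) (ν : V → ℝ≥0∞) (x : V) : ℝ≥0∞ :=
  ∑' w : List V, if x ∈ w then walkProb K ν w else 0

/-- The insertion law `ν` is admissible when every site has a chance of being
visited by a `(K,ν)`-walk. -/
def Admissible (K : V → V → ℝ≥0∞) (ν : V → ℝ≥0∞) : Prop := ∀ x, 0 < hitProb K ν x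

/-- The uniform law on `V`. -/
noncomputable def unifLaw (V : Type) [Fintype V] : V → ℝ≥0∞ :=
  fun _ => (Fintype.card V : ℝ≥0∞)⁻¹

/-! ### IDLA -/

/-- The IDLA update: the walker settles at the first site of its trajectory
which is not already occupied. -/
def idlaUpdate (S : Finset V) : List V → Finset V
  | [] => S
  | x :: xs => if x ∈ S then idlaUpdate S xs else insert x S

/-- The IDLA aggregate obtained from the initial set `A` after using the walks `ws`. -/
def idlaSet (A : Finset V) (ws : List (List V)) : Finset V := ws.foldl idlaUpdate A

/-- `P(T^A > t)`: probability that the IDLA process started from `A` and driven by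
i.i.d. `(K,ν)`-walks has not filled `V` after `t` steps. -/
noncomputable def idlaTail (K : V → V → ℝ≥0∞) (ν : V → ℝ≥0∞) (A : Finset V) (t : ℕ) : ℝ≥0∞ :=
  ∑' ws : Fin t → List V,
    (∏ i, walkProb K ν (ws i)) * (if idlaSet A (List.ofFn ws) = Finset.univ then 0 else 1)

/-- `E[T^A]`: the expected filling time of IDLA started from `A`. -/
noncomputable def idlaMean (K : V → V → ℝ≥0∞) (ν : V → ℝ≥0∞) (A : Finset V) : ℝ≥0∞ :=
  ∑' t : ℕ, idlaTail K ν A t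

/-- `Var(T^A)`: the variance of the filling time of IDLA started from `A`. -/
noncomputable def idlaVar (K : V → V → ℝ≥0∞) (ν : V → ℝ≥0∞) (A : Finset V) : ℝ≥0∞ :=
  (∑' t : ℕ, (2 * t + 1) * idlaTail K ν A t) - (idlaMean K ν A) ^ 2

/-! ### The ARW chain -/

/-- The state of a single site: empty, one sleeping particle, or `n+1` active particles. -/
inductive Site : Type
  | empty : Site
  | sleeping : Site
  | active (n : ℕ) : Site
deriving DecidableEq

/-- A configuration of particles. -/
abbrev Conf (V : Type) := V → Site

def Site.isActive : Site → Bool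
  | .active _ => true
  | _ => false

/-- The set of sites holding at least one active particle. -/
def activeSites (η : Conf V) : Finset V := Finset.univ.filter fun x => (η x).isActive

/-- Adding one active particle to a site (waking a sleeping particle if present). -/
def Site.addActive : Site → Site
  | .empty => .active 0
  | .sleeping => .active 1
  | .active n => .active (n + 1)

/-- Removing one active particle from a site. -/
def Site.removeOne : Site → Site
  | .active (n + 1) => .active n
  | _ => .empty

/-- Adding one active particle at site `y`. -/
def addActiveAt (η : Conf V) (y : V) : Conf V := Function.update η y (η y).addActive

/-- One sequential toppling step of ARW stabilization with sleep rate `lam`: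
an active site `x` is selected (if any); if its particle is alone it falls asleep
with probability `lam/(1+lam)`, moves to `y` with probability `K x y/(1+lam)` and
dies with the remaining probability; if it is not alone it moves to `y` with
probability `K x y` and dies with the remaining probability.  Stable
configurations are absorbing. -/
noncomputable def toppleKernel (K : V → V → ℝ≥0∞) (lam : ℝ) (η ξ : Conf V) : ℝ≥0∞ :=
  if h : (activeSites η).Nonempty then
    let x := h.choose
    let ημ : Conf V := Function.update η x (η x).removeOne
    let move : ℝ≥0∞ := ∑ y, if ξ = addActiveAt ημ y then K x y else 0
    let die : ℝ≥0∞ := if ξ = ημ then 1 - ∑ y, K x y else 0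
    if η x = Site.active 0 then
      ((if ξ = Function.update η x Site.sleeping then ENNReal.ofReal lam else 0) + move + die)
        / (ENNReal.ofReal lam + 1)
    else move + die
  else if ξ = η then 1 else 0

/-- Iterates of a sub-probability kernel on configurations. -/
noncomputable def kernelPow (M : Conf V → Conf V → ℝ≥0∞) : ℕ → Conf V → Conf V → ℝ≥0∞
  | 0 => fun η ξ => if ξ = η then 1 else 0
  | t + 1 => fun η ξ => ∑' σ : Conf V, M η σ * kernelPow M t σ ξ

/-- A stable configuration, seen as a configuration (`true` = sleeping particle). -/
def embed (b : V → Bool) : Conf V := fun x => if b x then Site.sleeping else Site.empty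

/-- One step of the `ARW(K,lam,ν)` chain: insert an active particle at a `ν`-distributed
site and stabilize; `arwStep K lam ν η ξ` is the probability of reaching the stable
configuration `ξ` from the stable configuration `η`. -/
noncomputable def arwStep (K : V → V → ℝ≥0∞) (lam : ℝ) (ν : V → ℝ≥0∞)
    (η ξ : V → Bool) : ℝ≥0∞ :=
  ∑ x, ν x * ⨆ t, kernelPow (toppleKernel K lam) t (addActiveAt (embed η) x) (embed ξ)

/-- The transition matrix of the `ARW(K,lam,ν)` chain on stable configurations. -/
noncomputable def arwMatrix (K : V → V → ℝ≥0∞) (lam : ℝ) (ν : V → ℝ≥0∞) :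
    Matrix (V → Bool) (V → Bool) ℝ :=
  Matrix.of fun η ξ => (arwStep K lam ν η ξ).toReal

/-! ### Distances to equilibrium, mixing and relaxation times -/

variable {S : Type} [Fintype S] [DecidableEq S]

/-- `π` is a stationary probability distribution for `P`. -/
def IsStationary (P : Matrix S S ℝ) (π : S → ℝ) : Prop :=
  (∀ s, 0 ≤ π s) ∧ (∑ s, π s = 1) ∧ ∀ s, ∑ r, π r * P r s = π s

/-- The separation distance to equilibrium at time `t`. -/
noncomputable def sepDist (P : Matrix S S ℝ) (π : S → ℝ) (t : ℕ) : ℝ :=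
  ⨆ η, ⨆ ξ, (1 - (P ^ t) η ξ / π ξ)

/-- The separation mixing time with precision `ε`. -/
noncomputable def sepMix (P : Matrix S S ℝ) (π : S → ℝ) (ε : ℝ) : ℕ :=
  sInf {t : ℕ | sepDist P π t ≤ ε}

/-- The total-variation distance to equilibrium at time `t`. -/
noncomputable def tvDist (P : Matrix S S ℝ) (π : S → ℝ) (t : ℕ) : ℝ :=
  ⨆ η, ⨆ A : Finset S, |∑ ξ ∈ A, ((P ^ t) η ξ - π ξ)|

/-- The total-variation mixing time with precision `ε`. -/
noncomputable def tvMix (P : Matrix S S ℝ) (π : S → ℝ) (ε : ℝ) : ℕ :=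
  sInf {t : ℕ | tvDist P π t ≤ ε}

/-- The relaxation time `1/(1-ρ)`, where `ρ` is the largest modulus of the
(complex) eigenvalues of `P` other than `1`. -/
noncomputable def relTime (P : Matrix S S ℝ) : ℝ :=
  (1 - sSup {r : ℝ | ∃ z : ℂ,
      z ≠ 1 ∧ (P.map (fun a : ℝ => (a : ℂ))).charpoly.IsRoot z ∧ r = ‖z‖})⁻¹

/-- Separation (or total-variation) cutoff for a sequence of chains with distance
functions `d n` and mixing times `ts n`. -/
def HasCutoff (d : ℕ → ℕ → ℝ) (ts : ℕ → ℕ) : Prop :=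
  ∀ α : ℝ, 0 ≤ α →
    (α < 1 → Tendsto (fun n => d n ⌊α * (ts n : ℝ)⌋₊) atTop (nhds 1)) ∧
    (1 < α → Tendsto (fun n => d n ⌊α * (ts n : ℝ)⌋₊) atTop (nhds 0))

end ARW

/-!
Couple the IDLA processes started from `A` and from `B = A ∪ {x}` by driving them with the
same walks. Each walk preserves the relation "`B` is `A` plus at most one site", so
`h(A) - h(B) = ∑ₜ P(T^B ≤ t < T^A)`. Once the process from `B` has filled `V`, the one from `A`
misses a single site `y`, which each new walk fails to fill with probability `q(y) ≤ 1 - p(y)`: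
the remaining delay is geometric, of mean at most `1 / min_z p(z)`.
-/

namespace ARW

variable {V : Type} [DecidableEq V]

section Coupling

def AtMostOneAhead (A B : Finset V) : Prop := B = A ∨ ∃ y, B = insert y A

lemma AtMostOneAhead.subset {A B : Finset V} (h : AtMostOneAhead A B) : A ⊆ B := by
  rcases h with rfl | ⟨y, rfl⟩
  · exact subset_rfl
  · exact Finset.subset_insert y A

lemma atMostOneAhead_idlaUpdate (S : Finset V) (w : List V) :
    AtMostOneAhead S (idlaUpdate S w) := by
  induction w with
  | nil => exact Or.inl rfl
  | cons a w ih =>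
    rw [idlaUpdate]
    split_ifs
    · exact ih
    · exact Or.inr ⟨a, rfl⟩

lemma AtMostOneAhead.insert_insert {A B : Finset V} (h : AtMostOneAhead A B) (a : V) :
    AtMostOneAhead (insert a A) (insert a B) := by
  rcases h with rfl | ⟨y, rfl⟩
  · exact Or.inl rfl
  · exact Or.inr ⟨y, Finset.insert_comm _ _ _⟩

lemma AtMostOneAhead.idlaUpdate {A B : Finset V} (h : AtMostOneAhead A B) (w : List V) :
    AtMostOneAhead (idlaUpdate A w) (idlaUpdate B w) := by
  induction w with
  | nil => exact h
  | cons a w ih =>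
    rcases h with rfl | ⟨y, rfl⟩
    · exact Or.inl rfl
    simp only [ARW.idlaUpdate, Finset.mem_insert]
    by_cases haA : a ∈ A
    · simpa [haA] using ih
    by_cases hay : a = y
    · subst hay
      simpa [haA] using atMostOneAhead_idlaUpdate (insert a A) w
    · simpa [haA, hay] using AtMostOneAhead.insert_insert (Or.inr ⟨y, rfl⟩) a

lemma AtMostOneAhead.idlaSet {A B : Finset V} (h : AtMostOneAhead A B) (ws : List (List V)) :
    AtMostOneAhead (idlaSet A ws) (idlaSet B ws) := by
  induction ws generalizing A B with
  | nil => exact h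
  | cons w ws ih => exact ih (h.idlaUpdate w)

lemma AtMostOneAhead.eq_univ_or_eq_univ_erase [Fintype V] {A : Finset V}
    (h : AtMostOneAhead A Finset.univ) :
    A = Finset.univ ∨ ∃ y, A = Finset.univ.erase y := by
  rcases h with h | ⟨y, h⟩
  · exact Or.inl h.symm
  by_cases hy : y ∈ A
  · exact Or.inl (by rwa [Finset.insert_eq_of_mem hy, eq_comm] at h)
  · exact Or.inr ⟨y, by rw [h, Finset.erase_insert hy]⟩

lemma idlaUpdate_univ [Fintype V] (w : List V) : idlaUpdate Finset.univ w = Finset.univ := by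
  induction w <;> simp [idlaUpdate, *]

lemma idlaUpdate_univ_erase [Fintype V] (y : V) (w : List V) :
    idlaUpdate (Finset.univ.erase y) w = if y ∈ w then Finset.univ else Finset.univ.erase y := by
  induction w with
  | nil => simp [idlaUpdate]
  | cons a w ih =>
    by_cases hay : a = y
    · simp [idlaUpdate, hay]
    · simp [idlaUpdate, hay, ih, Ne.symm hay]

end Coupling

section WalkLaw

variable [Fintype V] (K : V → V → ℝ≥0∞) (ν : V → ℝ≥0∞)

def listsLe : ℕ → Finset (List V)
  | 0 => {[]}
  | n + 1 => insert [] ((Finset.univ ×ˢ listsLe n).image fun p => p.1 :: p.2)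

lemma mem_listsLe : ∀ {n : ℕ} {w : List V}, w.length ≤ n → w ∈ listsLe n
  | 0, [], _ => Finset.mem_singleton_self _
  | _ + 1, [], _ => Finset.mem_insert_self _ _
  | _ + 1, a :: t, h =>
      Finset.mem_insert_of_mem (Finset.mem_image.mpr
        ⟨(a, t), Finset.mem_product.mpr ⟨Finset.mem_univ _, mem_listsLe (Nat.le_of_succ_le_succ h)⟩,
          rfl⟩)

lemma sum_listsLe_succ (f : List V → ℝ≥0∞) (n : ℕ) :
    ∑ w ∈ listsLe (n + 1), f w = f [] + ∑ a, ∑ t ∈ listsLe n, f (a :: t) := by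
  rw [listsLe, Finset.sum_insert (by simp),
    Finset.sum_image (by rintro ⟨a, s⟩ _ ⟨b, t⟩ _ h; simpa using h), Finset.sum_product]

lemma sum_listsLe_pathProb_le_one (hsub : SubStochastic K) :
    ∀ (n : ℕ) (x : V), ∑ w ∈ listsLe n, pathProb K x w ≤ 1
  | 0, x => by simp [listsLe, pathProb]
  | n + 1, x => by
      rw [sum_listsLe_succ]
      calc pathProb K x [] + ∑ y, ∑ t ∈ listsLe n, pathProb K x (y :: t)
          = (1 - ∑ y, K x y) + ∑ y, K x y * ∑ t ∈ listsLe n, pathProb K y t := by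
            simp only [pathProb, Finset.mul_sum]
        _ ≤ (1 - ∑ y, K x y) + ∑ y, K x y * 1 := by
            gcongr with y
            exact sum_listsLe_pathProb_le_one hsub n y
        _ = 1 := by simpa only [mul_one] using tsub_add_cancel_of_le (hsub x)

lemma tsum_walkProb_le_one (hsub : SubStochastic K) (hν : IsProbVec ν) :
    ∑' w : List V, walkProb K ν w ≤ 1 := by
  refine ENNReal.summable.tsum_le_of_sum_le fun s => ?_
  set n := s.sup List.length
  calc ∑ w ∈ s, walkProb K ν w
      ≤ ∑ w ∈ listsLe (n + 1), walkProb K ν w :=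
        Finset.sum_le_sum_of_subset fun w hw =>
          mem_listsLe ((Finset.le_sup (f := List.length) hw).trans n.le_succ)
    _ = ∑ x, ν x * ∑ t ∈ listsLe n, pathProb K x t := by
        simp only [sum_listsLe_succ, walkProb, zero_add, Finset.mul_sum]
    _ ≤ ∑ x, ν x * 1 := by
        gcongr with x
        exact sum_listsLe_pathProb_le_one K hsub n x
    _ = 1 := by simp only [mul_one]; exact hν

/-- `q(y)`: the probability that a `(K,ν)`-walk dies without visiting `y`. -/
noncomputable def missProb (y : V) : ℝ≥0∞ :=
  ∑' w : List V, if y ∈ w then 0 else walkProb K ν w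

lemma missProb_add_hitProb (y : V) :
    missProb K ν y + hitProb K ν y = ∑' w : List V, walkProb K ν w := by
  rw [missProb, hitProb, ← ENNReal.tsum_add]
  exact tsum_congr fun w => by split_ifs <;> simp

lemma iInf_hitProb_le_one_sub_missProb (hsub : SubStochastic K) (hν : IsProbVec ν) (y : V) :
    ⨅ z, hitProb K ν z ≤ 1 - missProb K ν y := by
  have hsum := (missProb_add_hitProb K ν y).trans_le (tsum_walkProb_le_one K ν hsub hν)
  have hq : missProb K ν y ≠ ∞ := ne_top_of_le_ne_top ENNReal.one_ne_top (le_self_add.trans hsum)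
  exact (iInf_le _ y).trans (ENNReal.le_sub_of_add_le_left hq hsum)

end WalkLaw

section GapTail

variable [Fintype V] (K : V → V → ℝ≥0∞) (ν : V → ℝ≥0∞)

/-- `P(T^B ≤ t < T^A)` when both IDLA processes are driven by the same walks. -/
noncomputable def idlaGapTail (A B : Finset V) (t : ℕ) : ℝ≥0∞ :=
  ∑' ws : Fin t → List V,
    (∏ i, walkProb K ν (ws i)) *
      (if idlaSet B (List.ofFn ws) = Finset.univ ∧ idlaSet A (List.ofFn ws) ≠ Finset.univ
        then 1 else 0)

lemma idlaGapTail_zero (A B : Finset V) :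
    idlaGapTail K ν A B 0 = if B = Finset.univ ∧ A ≠ Finset.univ then 1 else 0 := by
  simp [idlaGapTail, idlaSet]

lemma idlaGapTail_self (A : Finset V) (t : ℕ) : idlaGapTail K ν A A t = 0 := by
  simp [idlaGapTail]

lemma idlaGapTail_succ (A B : Finset V) (t : ℕ) :
    idlaGapTail K ν A B (t + 1) =
      ∑' w : List V, walkProb K ν w * idlaGapTail K ν (idlaUpdate A w) (idlaUpdate B w) t := by
  rw [idlaGapTail, ← (Fin.consEquiv fun _ => List V).tsum_eq, ENNReal.tsum_prod']
  refine tsum_congr fun w => ?_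
  rw [idlaGapTail, ← ENNReal.tsum_mul_left]
  refine tsum_congr fun ws => ?_
  rw [show (Fin.consEquiv fun _ => List V) (w, ws) = Fin.cons w ws from rfl,
    Fin.prod_univ_succ, List.ofFn_succ]
  simp only [Fin.cons_zero, Fin.cons_succ, mul_assoc]
  rfl

lemma idlaTail_eq_add_idlaGapTail {A B : Finset V} (h : AtMostOneAhead A B) (t : ℕ) :
    idlaTail K ν A t = idlaTail K ν B t + idlaGapTail K ν A B t := by
  rw [idlaTail, idlaTail, idlaGapTail, ← ENNReal.tsum_add]
  refine tsum_congr fun ws => ?_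
  have hmono := (h.idlaSet (List.ofFn ws)).subset
  by_cases hB : idlaSet B (List.ofFn ws) = Finset.univ
  · by_cases hA : idlaSet A (List.ofFn ws) = Finset.univ <;> simp [hA, hB]
  · have hA : idlaSet A (List.ofFn ws) ≠ Finset.univ := fun hA =>
      hB (Finset.univ_subset_iff.mp (hA ▸ hmono))
    simp [hA, hB]

lemma idlaGapTail_univ_erase (y : V) (t : ℕ) :
    idlaGapTail K ν (Finset.univ.erase y) Finset.univ t = missProb K ν y ^ t := by
  induction t with
  | zero => simp [idlaGapTail_zero]
  | succ t ih =>
    rw [idlaGapTail_succ, pow_succ', missProb, ← ENNReal.tsum_mul_right]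
    refine tsum_congr fun w => ?_
    rw [idlaUpdate_univ, idlaUpdate_univ_erase]
    split_ifs <;> simp [idlaGapTail_self, ih, missProb]

lemma tsum_idlaGapTail_univ_erase_le (hsub : SubStochastic K) (hν : IsProbVec ν) (y : V) :
    ∑' t, idlaGapTail K ν (Finset.univ.erase y) Finset.univ t ≤ (⨅ z, hitProb K ν z)⁻¹ := by
  simp only [idlaGapTail_univ_erase, ENNReal.tsum_geometric]
  exact ENNReal.inv_le_inv.mpr (iInf_hitProb_le_one_sub_missProb K ν hsub hν y)

lemma sum_range_idlaGapTail_le (hsub : SubStochastic K) (hν : IsProbVec ν) (N : ℕ)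
    {A B : Finset V} (h : AtMostOneAhead A B) :
    ∑ t ∈ Finset.range N, idlaGapTail K ν A B t ≤ (⨅ z, hitProb K ν z)⁻¹ := by
  induction N generalizing A B with
  | zero => simp
  | succ N ih =>
    by_cases hB : B = Finset.univ
    · subst hB
      rcases h.eq_univ_or_eq_univ_erase with rfl | ⟨y, rfl⟩
      · simp [idlaGapTail_self]
      · exact (ENNReal.sum_le_tsum _).trans (tsum_idlaGapTail_univ_erase_le K ν hsub hν y)
    calc ∑ t ∈ Finset.range (N + 1), idlaGapTail K ν A B t
        = ∑' w, walkProb K ν w *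
            ∑ t ∈ Finset.range N, idlaGapTail K ν (idlaUpdate A w) (idlaUpdate B w) t := by
          rw [Finset.sum_range_succ', idlaGapTail_zero, if_neg fun hfull => hB hfull.1, add_zero]
          simp only [idlaGapTail_succ, Finset.mul_sum]
          exact (Summable.tsum_finsetSum fun _ _ => ENNReal.summable).symm
      _ ≤ ∑' w, walkProb K ν w * (⨅ z, hitProb K ν z)⁻¹ :=
          ENNReal.tsum_le_tsum fun w => by gcongr; exact ih (h.idlaUpdate w)
      _ = (∑' w, walkProb K ν w) * (⨅ z, hitProb K ν z)⁻¹ := ENNReal.tsum_mul_right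
      _ ≤ (⨅ z, hitProb K ν z)⁻¹ :=
          mul_le_of_le_one_left zero_le (tsum_walkProb_le_one K ν hsub hν)

end GapTail

theorem idla_increment_control_general
    {V : Type} [Fintype V] [DecidableEq V]
    (K : V → V → ℝ≥0∞) (hsub : SubStochastic K)
    (ν : V → ℝ≥0∞) (hν : IsProbVec ν)
    (x : V) (A : Finset V) :
    idlaMean K ν (insert x A) ≤ idlaMean K ν A
    ∧ idlaMean K ν A - idlaMean K ν (insert x A) ≤ (⨅ z, hitProb K ν z)⁻¹ := by
  have hAhead : AtMostOneAhead A (insert x A) := Or.inr ⟨x, rfl⟩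
  have hsplit : idlaMean K ν A =
      idlaMean K ν (insert x A) + ∑' t, idlaGapTail K ν A (insert x A) t := by
    rw [idlaMean, idlaMean, ← ENNReal.tsum_add]
    exact tsum_congr (idlaTail_eq_add_idlaGapTail K ν hAhead)
  have hgap : ∑' t, idlaGapTail K ν A (insert x A) t ≤ (⨅ z, hitProb K ν z)⁻¹ :=
    ENNReal.tsum_le_of_sum_range_le fun N => sum_range_idlaGapTail_le K ν hsub hν N hAhead
  rw [hsplit]
  exact ⟨le_self_add, tsub_le_iff_left.mpr (add_le_add_right hgap _)⟩

/-- **Lemma (Control on increments).**  With `h(A) := E[T^A]` the expected filling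
time of IDLA started from `A`, for any `x ∈ V` and `A ⊆ V`,
`0 ≤ h(A) − h(A ∪ {x}) ≤ 1 / min_z p(z)`. -/
theorem idla_increment_control
    {V : Type} [Fintype V] [DecidableEq V] [Nonempty V]
    (K : V → V → ℝ≥0∞) (hsub : SubStochastic K) (hnd : NonDegenerate K)
    (ν : V → ℝ≥0∞) (hν : IsProbVec ν) (hadm : Admissible K ν)
    (x : V) (A : Finset V) :
    idlaMean K ν (insert x A) ≤ idlaMean K ν A
    ∧ idlaMean K ν A - idlaMean K ν (insert x A) ≤ (⨅ z, hitProb K ν z)⁻¹ :=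
  idla_increment_control_general K hsub ν hν x A

end ARW
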